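/- arXiv:math/0507073 — 4 statements merged into one kernel-verified Lean document; each statement's English description precedes it below -/
import Mathlib

section
/- For the Hénon mapping F(x,y) = (x² + 9/32 - y/8, x), every point (x,y) ∈ ℂ² with |y| < (4/3)|x|² and |x| > 4 has unbounded forward orbit; in particular its orbit does not converge to the attractive fixed point (3/8, 3/8). Consequently, the basin of attraction of (3/8, 3/8) is not all of ℂ². -/
/-!
On the region `|y| < (4/3)|x|², |x| > 4` the quadratic term dominates:
`|x² + 9/32 - y/8| ≥ |x|² - 9/32 - |y|/8 > (5/6)|x|² - 9/32 ≥ 2|x|`.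
So the region is forward invariant and `|x|` at least doubles at each step,
hence every orbit starting there escapes to infinity and cannot converge.
-/

open Filter

noncomputable def henon (q : ℂ × ℂ) : ℂ × ℂ := (q.1 ^ 2 + 9 / 32 - q.2 / 8, q.1)

def henonEscapeRegion : Set (ℂ × ℂ) := {q | ‖q.2‖ < 4 / 3 * ‖q.1‖ ^ 2 ∧ 4 < ‖q.1‖}

lemma norm_fst_sq_sub_le_norm_henon_fst (q : ℂ × ℂ) :
    ‖q.1‖ ^ 2 - 9 / 32 - ‖q.2‖ / 8 ≤ ‖(henon q).1‖ := by
  have hsub := norm_sub_norm_le (q.1 ^ 2) (q.2 / 8 - 9 / 32)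
  have hconst := norm_sub_le (q.2 / 8) (9 / 32 : ℂ)
  have hfst : (henon q).1 = q.1 ^ 2 - (q.2 / 8 - 9 / 32) := by simp only [henon]; ring
  rw [hfst]
  norm_num [norm_pow, norm_div] at hsub hconst ⊢
  linarith

lemma two_mul_norm_fst_le_henon_fst {q : ℂ × ℂ} (hq : q ∈ henonEscapeRegion) :
    2 * ‖q.1‖ ≤ ‖(henon q).1‖ := by
  obtain ⟨hy, hx⟩ := hq
  nlinarith [norm_fst_sq_sub_le_norm_henon_fst q]

lemma mapsTo_henon_escapeRegion : Set.MapsTo henon henonEscapeRegion henonEscapeRegion := by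
  intro q hq
  have hgrow := two_mul_norm_fst_le_henon_fst hq
  have hx : 4 < ‖q.1‖ := hq.2
  refine ⟨?_, by linarith⟩
  show ‖q.1‖ < 4 / 3 * ‖(henon q).1‖ ^ 2
  nlinarith

lemma tendsto_norm_henon_iterate {p : ℂ × ℂ} (hp : p ∈ henonEscapeRegion) :
    Tendsto (fun n => ‖henon^[n] p‖) atTop atTop := by
  have hfst : Tendsto (fun n => ‖(henon^[n] p).1‖) atTop atTop := by
    refine tendsto_atTop_of_geom_le (by simpa using zero_lt_four.trans hp.2) one_lt_two
      fun n => ?_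
    rw [Function.iterate_succ_apply']
    exact two_mul_norm_fst_le_henon_fst (mapsTo_henon_escapeRegion.iterate n hp)
  exact tendsto_atTop_mono (fun n => norm_fst_le _) hfst

/-- For the Hénon mapping `F(x,y) = (x² + 9/32 - y/8, x)`, every point `(x,y)` with
`|y| < (4/3)|x|²` and `|x| > 4` has unbounded forward orbit; in particular its orbit
does not converge to the attractive fixed point `(3/8, 3/8)`, and the basin of
attraction of `(3/8, 3/8)` is not all of `ℂ²`. -/
theorem stmt1
    (F : ℂ × ℂ → ℂ × ℂ)
    (hF : ∀ x y : ℂ, F (x, y) = (x ^ 2 + 9 / 32 - y / 8, x)) :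
    (∀ p : ℂ × ℂ, ‖p.2‖ < (4 / 3) * ‖p.1‖ ^ 2 → ‖p.1‖ > 4 →
      (¬ ∃ M : ℝ, ∀ n : ℕ, ‖F^[n] p‖ ≤ M) ∧
      ¬ Tendsto (fun n : ℕ => F^[n] p) atTop (nhds ((3 : ℂ) / 8, (3 : ℂ) / 8))) ∧
    {q : ℂ × ℂ | Tendsto (fun n : ℕ => F^[n] q) atTop (nhds ((3 : ℂ) / 8, (3 : ℂ) / 8))}
      ≠ Set.univ := by
  obtain rfl : F = henon := funext fun q => hF q.1 q.2
  have escape : ∀ p ∈ henonEscapeRegion,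
      (¬ ∃ M : ℝ, ∀ n : ℕ, ‖henon^[n] p‖ ≤ M) ∧
      ¬ Tendsto (fun n : ℕ => henon^[n] p) atTop (nhds ((3 : ℂ) / 8, (3 : ℂ) / 8)) := by
    intro p hp
    have hnorm := tendsto_norm_henon_iterate hp
    refine ⟨fun ⟨M, hM⟩ => ?_, fun hconv => not_tendsto_nhds_of_tendsto_atTop hnorm _ hconv.norm⟩
    obtain ⟨n, hn⟩ := (hnorm.eventually_gt_atTop M).exists
    exact (hM n).not_gt hn
  refine ⟨fun p hy hx => escape p ⟨hy, hx⟩, fun hbasin => ?_⟩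
  have h5 : ((5 : ℂ), (0 : ℂ)) ∈ henonEscapeRegion := by norm_num [henonEscapeRegion]
  exact (escape _ h5).2 (Set.eq_univ_iff_forall.mp hbasin _)
end

section
/- For the Hénon mapping F(x,y) = (x² + c - a·y, x) with a ≠ 0 and R > (1/2)(1 + |a| + √((1+|a|)² + 4|c|)), every periodic point of F lies in the open bidisc {(x,y) : |x| < R, |y| < R}. Equivalently, every point whose full (forward and backward) orbit under F is bounded lies in this bidisc. -/
/-- For the Hénon map `F(x,y) = (x² + c - a·y, x)` with `a ≠ 0` and
`R > (1/2)(1 + |a| + √((1+|a|)² + 4|c|))`: every periodic point of `F` lies in the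
open bidisc `{|x| < R, |y| < R}`; equivalently, every point whose full (forward and
backward) orbit under `F` is bounded lies in this bidisc.  Here the backward orbit
is given by the explicit inverse `G(x,y) = (y, (y² + c - x)/a)`. -/
theorem stmt6
    (a c : ℂ) (ha : a ≠ 0) (R : ℝ)
    (hR : R > (1 / 2) * (1 + ‖a‖ + Real.sqrt ((1 + ‖a‖) ^ 2 + 4 * ‖c‖)))
    (F G : ℂ × ℂ → ℂ × ℂ)
    (hF : ∀ x y : ℂ, F (x, y) = (x ^ 2 + c - a * y, x))
    (hG : ∀ x y : ℂ, G (x, y) = (y, (y ^ 2 + c - x) / a)) :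
    (∀ p : ℂ × ℂ, ∀ k : ℕ, 1 ≤ k → F^[k] p = p → ‖p.1‖ < R ∧ ‖p.2‖ < R) ∧
    (∀ p : ℂ × ℂ, (∃ M : ℝ, ∀ n : ℕ, ‖F^[n] p‖ ≤ M ∧ ‖G^[n] p‖ ≤ M) →
      ‖p.1‖ < R ∧ ‖p.2‖ < R) := by
  have h0a : (0:ℝ) < ‖a‖ := norm_pos_iff.mpr ha
  set A := ‖a‖ with hA
  set C := ‖c‖ with hCdef
  have hC : 0 ≤ C := norm_nonneg c
  have hs : 1 + A ≤ Real.sqrt ((1+A)^2 + 4*C) := by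
    have h := Real.sqrt_le_sqrt (show (1+A)^2 ≤ (1+A)^2 + 4*C by nlinarith)
    rwa [Real.sqrt_sq (by positivity)] at h
  have hR1 : 1 + A < R := by nlinarith
  have hRpos : 0 < R := by nlinarith
  have hkey : (1+A)*R + C < R*R := by
    have hsq : Real.sqrt ((1+A)^2+4*C) ^ 2 = (1+A)^2 + 4*C :=
      Real.sq_sqrt (by positivity)
    nlinarith [Real.sqrt_nonneg ((1+A)^2+4*C)]
  obtain ⟨lf, hlfdef⟩ : ∃ l : ℝ, l = (R*R - A*R - C)/R := ⟨_, rfl⟩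
  obtain ⟨lg, hlgdef⟩ : ∃ l : ℝ, l = (R*R - R - C)/(A*R) := ⟨_, rfl⟩
  have hlf : 1 < lf := by
    rw [hlfdef, lt_div_iff₀ hRpos]; nlinarith
  have hlg : 1 < lg := by
    rw [hlgdef, lt_div_iff₀ (by positivity)]; nlinarith
  have step_f : ∀ q : ℂ × ℂ, R ≤ ‖q.1‖ → ‖q.2‖ ≤ ‖q.1‖ →
      R ≤ ‖(F q).1‖ ∧ ‖(F q).2‖ ≤ ‖(F q).1‖ ∧ lf * ‖q.1‖ ≤ ‖(F q).1‖ := by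
    rintro ⟨x, y⟩ hx hy
    simp only at hx hy
    rw [hF]
    simp only
    have e1 : ‖x^2‖ ≤ ‖x^2 + c - a*y‖ + ‖c - a*y‖ := by
      calc ‖x^2‖ = ‖(x^2 + c - a*y) - (c - a*y)‖ := by ring_nf
      _ ≤ _ := norm_sub_le _ _
    have e2 : ‖c - a*y‖ ≤ C + A*‖y‖ := by
      simpa [norm_mul] using norm_sub_le c (a*y)
    have e3 : ‖x^2‖ = ‖x‖^2 := norm_pow x 2
    have h1 : ‖x‖^2 - C - A*‖y‖ ≤ ‖x^2 + c - a*y‖ := by linarith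
    have hmain : lf * ‖x‖ ≤ ‖x^2 + c - a*y‖ := by
      rw [hlfdef, div_mul_eq_mul_div, div_le_iff₀ hRpos]
      nlinarith [norm_nonneg y, norm_nonneg x,
        mul_le_mul_of_nonneg_right h1 hRpos.le,
        mul_nonneg (mul_nonneg hRpos.le (norm_nonneg x)) (sub_nonneg.mpr hx),
        mul_nonneg hC (sub_nonneg.mpr hx),
        mul_le_mul_of_nonneg_left hy h0a.le,
        mul_le_mul_of_nonneg_right (mul_le_mul_of_nonneg_left hy h0a.le) hRpos.le]
    have h1x : ‖x‖ ≤ lf * ‖x‖ := by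
      have h := mul_le_mul_of_nonneg_right hlf.le (norm_nonneg x)
      linarith [h, one_mul ‖x‖]
    have hlx : R ≤ lf * ‖x‖ := le_trans hx h1x
    exact ⟨le_trans hlx hmain, le_trans h1x hmain, hmain⟩
  have step_g : ∀ q : ℂ × ℂ, R ≤ ‖q.2‖ → ‖q.1‖ ≤ ‖q.2‖ →
      R ≤ ‖(G q).2‖ ∧ ‖(G q).1‖ ≤ ‖(G q).2‖ ∧ lg * ‖q.2‖ ≤ ‖(G q).2‖ := by
    rintro ⟨x, y⟩ hy hx
    simp only at hx hy
    rw [hG]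
    simp only
    have e1 : ‖y^2‖ ≤ ‖y^2 + c - x‖ + ‖c - x‖ := by
      calc ‖y^2‖ = ‖(y^2 + c - x) - (c - x)‖ := by ring_nf
      _ ≤ _ := norm_sub_le _ _
    have e2 : ‖c - x‖ ≤ C + ‖x‖ := norm_sub_le c x
    have e3 : ‖y^2‖ = ‖y‖^2 := norm_pow y 2
    have h1 : ‖y‖^2 - C - ‖x‖ ≤ ‖y^2 + c - x‖ := by linarith
    have hnd : ‖(y^2 + c - x)/a‖ = ‖y^2 + c - x‖ / A := by
      rw [norm_div]
    have hmain : lg * ‖y‖ ≤ ‖(y^2 + c - x)/a‖ := by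
      rw [hnd, hlgdef, div_mul_eq_mul_div, div_le_div_iff₀ (by positivity) h0a]
      nlinarith [norm_nonneg x, norm_nonneg y,
        mul_le_mul_of_nonneg_right h1 (mul_nonneg h0a.le hRpos.le),
        mul_nonneg h0a.le (mul_nonneg (mul_nonneg hRpos.le (norm_nonneg y)) (sub_nonneg.mpr hy)),
        mul_nonneg h0a.le (mul_nonneg hC (sub_nonneg.mpr hy)),
        mul_le_mul_of_nonneg_left hx (mul_nonneg h0a.le hRpos.le)]
    have h1y : ‖y‖ ≤ lg * ‖y‖ := by
      have h := mul_le_mul_of_nonneg_right hlg.le (norm_nonneg y)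
      linarith [h, one_mul ‖y‖]
    have hly : R ≤ lg * ‖y‖ := le_trans hy h1y
    exact ⟨le_trans hly hmain, le_trans h1y hmain, hmain⟩
  have iter_f : ∀ q : ℂ × ℂ, R ≤ ‖q.1‖ → ‖q.2‖ ≤ ‖q.1‖ → ∀ n : ℕ,
      R ≤ ‖(F^[n] q).1‖ ∧ ‖(F^[n] q).2‖ ≤ ‖(F^[n] q).1‖ ∧
        lf^n * ‖q.1‖ ≤ ‖(F^[n] q).1‖ := by
    intro q hq1 hq2 n
    induction n with
    | zero => refine ⟨by simpa using hq1, by simpa using hq2, by simp⟩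
    | succ n ih =>
      obtain ⟨h1, h2, h3⟩ := ih
      obtain ⟨g1, g2, g3⟩ := step_f _ h1 h2
      rw [Function.iterate_succ_apply']
      refine ⟨g1, g2, ?_⟩
      calc lf^(n+1) * ‖q.1‖ = lf * (lf^n * ‖q.1‖) := by ring
      _ ≤ lf * ‖(F^[n] q).1‖ :=
        mul_le_mul_of_nonneg_left h3 (by linarith)
      _ ≤ _ := g3
  have iter_g : ∀ q : ℂ × ℂ, R ≤ ‖q.2‖ → ‖q.1‖ ≤ ‖q.2‖ → ∀ n : ℕ,
      R ≤ ‖(G^[n] q).2‖ ∧ ‖(G^[n] q).1‖ ≤ ‖(G^[n] q).2‖ ∧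
        lg^n * ‖q.2‖ ≤ ‖(G^[n] q).2‖ := by
    intro q hq1 hq2 n
    induction n with
    | zero => refine ⟨by simpa using hq1, by simpa using hq2, by simp⟩
    | succ n ih =>
      obtain ⟨h1, h2, h3⟩ := ih
      obtain ⟨g1, g2, g3⟩ := step_g _ h1 h2
      rw [Function.iterate_succ_apply']
      refine ⟨g1, g2, ?_⟩
      calc lg^(n+1) * ‖q.2‖ = lg * (lg^n * ‖q.2‖) := by ring
      _ ≤ lg * ‖(G^[n] q).2‖ :=
        mul_le_mul_of_nonneg_left h3 (by linarith)
      _ ≤ _ := g3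
  have hGF : ∀ z : ℂ × ℂ, G (F z) = z := by
    rintro ⟨x, y⟩
    rw [hF, hG]
    refine Prod.ext rfl ?_
    field_simp
    ring
  have hGFn : ∀ n : ℕ, ∀ z : ℂ × ℂ, G^[n] (F^[n] z) = z := by
    intro n
    induction n with
    | zero => intro z; simp
    | succ n ih =>
      intro z
      rw [Function.iterate_succ_apply' F, Function.iterate_succ_apply G, hGF,
        ih]
  have core : ∀ p : ℂ × ℂ, ¬ (‖p.1‖ < R ∧ ‖p.2‖ < R) →
      (R ≤ ‖p.1‖ ∧ ‖p.2‖ ≤ ‖p.1‖) ∨ (R ≤ ‖p.2‖ ∧ ‖p.1‖ ≤ ‖p.2‖) := by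
    intro p h
    by_cases h1 : ‖p.2‖ ≤ ‖p.1‖
    · left
      refine ⟨?_, h1⟩
      rcases not_and_or.mp h with h' | h'
      · exact not_lt.mp h'
      · exact le_trans (not_lt.mp h') h1
    · right
      push_neg at h1
      refine ⟨?_, h1.le⟩
      rcases not_and_or.mp h with h' | h'
      · exact le_trans (not_lt.mp h') h1.le
      · exact not_lt.mp h'
  constructor
  · intro p k hk hpk
    by_contra hcon
    rcases core p hcon with ⟨h1, h2⟩ | ⟨h1, h2⟩
    · have h3 := (iter_f p h1 h2 k).2.2
      rw [hpk] at h3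
      have hpow : 1 < lf ^ k := one_lt_pow₀ hlf (by omega)
      have h5 := mul_lt_mul_of_pos_right hpow (lt_of_lt_of_le hRpos h1)
      rw [one_mul] at h5
      linarith
    · have hGk : G^[k] p = p := by
        have := hGFn k p
        rwa [hpk] at this
      have h3 := (iter_g p h1 h2 k).2.2
      rw [hGk] at h3
      have hpow : 1 < lg ^ k := one_lt_pow₀ hlg (by omega)
      have h5 := mul_lt_mul_of_pos_right hpow (lt_of_lt_of_le hRpos h1)
      rw [one_mul] at h5
      linarith
  · rintro p ⟨M, hM⟩
    by_contra hcon
    rcases core p hcon with ⟨h1, h2⟩ | ⟨h1, h2⟩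
    · obtain ⟨n, hn⟩ := pow_unbounded_of_one_lt (M / R) hlf
      have h3 := (iter_f p h1 h2 n).2.2
      have h4 : ‖(F^[n] p).1‖ ≤ M := le_trans (norm_fst_le _) (hM n).1
      rw [div_lt_iff₀ hRpos] at hn
      have hpow : (0:ℝ) < lf ^ n := pow_pos (by linarith) n
      have h5 := mul_le_mul_of_nonneg_left h1 hpow.le
      linarith
    · obtain ⟨n, hn⟩ := pow_unbounded_of_one_lt (M / R) hlg
      have h3 := (iter_g p h1 h2 n).2.2
      have h4 : ‖(G^[n] p).2‖ ≤ M := le_trans (norm_snd_le _) (hM n).2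
      rw [div_lt_iff₀ hRpos] at hn
      have hpow : (0:ℝ) < lg ^ n := pow_pos (by linarith) n
      have h5 := mul_le_mul_of_nonneg_left h1 hpow.le
      linarith
end

section
/- Let a, c ∈ ℂ, R > 0, and suppose 2√(|c| - R(1+|a|)) - |a| > 1 (in particular |c| > R(1+|a|)). Then for every x ∈ ℂ with |x|² ≥ |c| - R(1+|a|) and every (ξ₁, ξ₂) ∈ ℂ² with |ξ₁| > |ξ₂|, we have |2x·ξ₁ - a·ξ₂| > |ξ₁|. In other words, the derivative of F(x,y) = (x² + c - a·y, x) maps the horizontal cone {|ξ₂| < |ξ₁|} strictly into itself at all such points. -/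
theorem norm_lt_norm_mul_sub_mul {𝕜 : Type*} [NormedDivisionRing 𝕜] {a b ξ₁ ξ₂ : 𝕜}
    (hb : 1 + ‖a‖ < ‖b‖) (hξ : ‖ξ₂‖ < ‖ξ₁‖) : ‖ξ₁‖ < ‖b * ξ₁ - a * ξ₂‖ := by
  have hξ₁ : 0 < ‖ξ₁‖ := (norm_nonneg ξ₂).trans_lt hξ
  calc ‖ξ₁‖ < (‖b‖ - ‖a‖) * ‖ξ₁‖ := by nlinarith
    _ ≤ ‖b‖ * ‖ξ₁‖ - ‖a‖ * ‖ξ₂‖ := by nlinarith [mul_le_mul_of_nonneg_left hξ.le (norm_nonneg a)]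
    _ = ‖b * ξ₁‖ - ‖a * ξ₂‖ := by rw [norm_mul, norm_mul]
    _ ≤ ‖b * ξ₁ - a * ξ₂‖ := norm_sub_norm_le _ _

theorem stmt12_general
    (a c : ℂ) (R : ℝ)
    (hcone : 2 * Real.sqrt (‖c‖ - R * (1 + ‖a‖)) - ‖a‖ > 1)
    (x : ℂ) (hx : ‖x‖ ^ 2 ≥ ‖c‖ - R * (1 + ‖a‖))
    (ξ₁ ξ₂ : ℂ) (hξ : ‖ξ₁‖ > ‖ξ₂‖) :
    ‖2 * x * ξ₁ - a * ξ₂‖ > ‖ξ₁‖ := by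
  have hsqrt : Real.sqrt (‖c‖ - R * (1 + ‖a‖)) ≤ ‖x‖ :=
    Real.sqrt_le_iff.mpr ⟨norm_nonneg x, hx⟩
  have hmult : 1 + ‖a‖ < ‖2 * x‖ := by
    rw [norm_mul, Complex.norm_two]
    linarith
  exact norm_lt_norm_mul_sub_mul hmult hξ

/-- If `2√(|c| - R(1+|a|)) - |a| > 1`, then for every `x` with
`|x|² ≥ |c| - R(1+|a|)` and every tangent vector `(ξ₁, ξ₂)` in the horizontal cone
(`|ξ₁| > |ξ₂|`), we have `|2x·ξ₁ - a·ξ₂| > |ξ₁|`: the derivative of the Hénon map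
`F(x,y) = (x² + c - a·y, x)` maps the horizontal cone strictly into itself. -/
theorem stmt12
    (a c : ℂ) (R : ℝ) (hR : 0 < R)
    (hcone : 2 * Real.sqrt (‖c‖ - R * (1 + ‖a‖)) - ‖a‖ > 1)
    (x : ℂ) (hx : ‖x‖ ^ 2 ≥ ‖c‖ - R * (1 + ‖a‖))
    (ξ₁ ξ₂ : ℂ) (hξ : ‖ξ₁‖ > ‖ξ₂‖) :
    ‖2 * x * ξ₁ - a * ξ₂‖ > ‖ξ₁‖ :=
  stmt12_general a c R hcone x hx ξ₁ ξ₂ hξ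
end

section
/- Let α > 1/2 and β ≥ 2α² + α + 1/4 + α·√(4α² + 4α + 2). Set R = α(1 + |a| + √((1+|a|)² + 4|c|)). If |c| > β(1+|a|)², then 2√(|c| - R(1+|a|)) > 1 + |a|; in particular the trapping-cone inequality 2√(|c| - R(1+|a|)) - |a| > 1 holds. -/
/-!
The inequality is homogeneous of degree 2 in `(1 + ‖a‖, √‖c‖)`, so it suffices to treat
`1 + ‖a‖ = 1` and `‖c‖ = x`. With `y = √(1 + 4x)` it then reads `y² - 4αy > 4α + 2`, which holds
once `y` exceeds the larger root `2α + √(4α² + 4α + 2)` of that quadratic; the lower bound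
on `β` is exactly the value of `x` at which `y` equals this root.
-/

namespace Real

theorem lt_sq_sub_two_mul_of_add_sqrt_lt {b q y : ℝ} (hy : b + √(b ^ 2 + q) < y) :
    q < y ^ 2 - 2 * b * y := by
  have hpos : 0 < y - b := by linarith [sqrt_nonneg (b ^ 2 + q)]
  have hsq : b ^ 2 + q < (y - b) ^ 2 := (sqrt_lt' hpos).1 (by linarith)
  linarith

theorem quarter_lt_sub_mul_one_add_sqrt {α x : ℝ}
    (hx : 2 * α ^ 2 + α + 1 / 4 + α * √(4 * α ^ 2 + 4 * α + 2) < x) :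
    1 / 4 < x - α * (1 + √(1 + 4 * x)) := by
  set u := √(4 * α ^ 2 + 4 * α + 2)
  have hu : u ^ 2 = 4 * α ^ 2 + 4 * α + 2 := sq_sqrt (by nlinarith [sq_nonneg (2 * α + 1)])
  have hroot : 2 * α + u < √(1 + 4 * x) := lt_sqrt_of_sq_lt (by nlinarith)
  have hquad := lt_sq_sub_two_mul_of_add_sqrt_lt (b := 2 * α) (q := 4 * α + 2)
    (by rwa [show (2 * α) ^ 2 + (4 * α + 2) = 4 * α ^ 2 + 4 * α + 2 by ring])
  rw [sq_sqrt (by nlinarith [sq_nonneg (2 * α + u)])] at hquad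
  linarith

theorem sq_div_four_lt_sub_mul_add_sqrt {α A C : ℝ} (hA : 0 < A)
    (hC : (2 * α ^ 2 + α + 1 / 4 + α * √(4 * α ^ 2 + 4 * α + 2)) * A ^ 2 < C) :
    A ^ 2 / 4 < C - α * (A + √(A ^ 2 + 4 * C)) * A := by
  obtain ⟨x, rfl⟩ : ∃ x, C = x * A ^ 2 := ⟨C / A ^ 2, by field_simp⟩
  have hx := quarter_lt_sub_mul_one_add_sqrt (lt_of_mul_lt_mul_right hC (sq_nonneg A))
  have hscale : √(A ^ 2 + 4 * (x * A ^ 2)) = A * √(1 + 4 * x) := by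
    rw [show A ^ 2 + 4 * (x * A ^ 2) = A ^ 2 * (1 + 4 * x) by ring,
      sqrt_mul (sq_nonneg A), sqrt_sq hA.le]
  rw [hscale]
  nlinarith [mul_lt_mul_of_pos_right hx (pow_pos hA 2)]

end Real

theorem stmt13_general
    (a c : ℂ) (α β R : ℝ)
    (hβ : β ≥ 2 * α ^ 2 + α + 1 / 4 + α * Real.sqrt (4 * α ^ 2 + 4 * α + 2))
    (hRdef : R = α * (1 + ‖a‖ + Real.sqrt ((1 + ‖a‖) ^ 2 + 4 * ‖c‖)))
    (hc : ‖c‖ > β * (1 + ‖a‖) ^ 2) :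
    2 * Real.sqrt (‖c‖ - R * (1 + ‖a‖)) > 1 + ‖a‖ ∧
    2 * Real.sqrt (‖c‖ - R * (1 + ‖a‖)) - ‖a‖ > 1 := by
  have hA : 0 < 1 + ‖a‖ := by positivity
  have hkey := Real.sq_div_four_lt_sub_mul_add_sqrt hA
    (lt_of_le_of_lt (mul_le_mul_of_nonneg_right hβ (sq_nonneg _)) hc)
  have hsqrt : (1 + ‖a‖) / 2 < Real.sqrt (‖c‖ - R * (1 + ‖a‖)) :=
    Real.lt_sqrt_of_sq_lt (by rw [hRdef]; linarith)
  constructor <;> linarith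

/-- Key inequality for Hénon horseshoes: if `α > 1/2`,
`β ≥ 2α² + α + 1/4 + α√(4α² + 4α + 2)`, `R = α(1 + |a| + √((1+|a|)² + 4|c|))`, and
`|c| > β(1+|a|)²`, then `2√(|c| - R(1+|a|)) > 1 + |a|`; in particular the
trapping-cone inequality `2√(|c| - R(1+|a|)) - |a| > 1` holds. -/
theorem stmt13
    (a c : ℂ) (α β R : ℝ)
    (hα : 1 / 2 < α)
    (hβ : β ≥ 2 * α ^ 2 + α + 1 / 4 + α * Real.sqrt (4 * α ^ 2 + 4 * α + 2))
    (hRdef : R = α * (1 + ‖a‖ + Real.sqrt ((1 + ‖a‖) ^ 2 + 4 * ‖c‖)))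
    (hc : ‖c‖ > β * (1 + ‖a‖) ^ 2) :
    2 * Real.sqrt (‖c‖ - R * (1 + ‖a‖)) > 1 + ‖a‖ ∧
    2 * Real.sqrt (‖c‖ - R * (1 + ‖a‖)) - ‖a‖ > 1 :=
  stmt13_general a c α β R hβ hRdef hc
end
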